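/- Let m ≥ 2, 0 ≤ β < 1, let k(z) = z + ∑_{n≥2} k_n z^n be bi-univalent with k₂ ≠ 0 and k₃ ≠ 0, and let f(z) = z + ∑_{n≥2} a_n z^n belong to the class BR^k(m; β). Then |a₃| ≤ m(1−β)/|k₃|. -/

import Mathlib

open MeasureTheory Set Metric Complex

noncomputable section

/-- The `n`-th MacLaurin coefficient of `f`, i.e. `f⁽ⁿ⁾(0)/n!`. -/
def mc (f : ℂ → ℂ) (n : ℕ) : ℂ := iteratedDeriv n f 0 / (n.factorial : ℂ)

/-- The open unit disk in `ℂ`. -/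
def unitDisk : Set ℂ := Metric.ball (0 : ℂ) 1

/-- The kernel `(1 - z e^{it})/(1 + z e^{it})`. -/
def pmKernel (z : ℂ) (t : ℝ) : ℂ :=
  (1 - z * Complex.exp (t * Complex.I)) / (1 + z * Complex.exp (t * Complex.I))

/-- The class `P_m` of functions with bounded boundary rotation: `p` is analytic on the unit
disk, `p 0 = 1`, and `p` is represented against a finite signed Borel measure
`μ = μp - μn` on `[0, 2π]` with `μ([0,2π]) = 1` and total variation `‖μ‖ ≤ m/2`. -/
def MemPm (m : ℝ) (p : ℂ → ℂ) : Prop :=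
  AnalyticOnNhd ℂ p unitDisk ∧ p 0 = 1 ∧
  ∃ μp μn : Measure ℝ, IsFiniteMeasure μp ∧ IsFiniteMeasure μn ∧
    (μp (Set.Icc 0 (2 * Real.pi))).toReal - (μn (Set.Icc 0 (2 * Real.pi))).toReal = 1 ∧
    (μp (Set.Icc 0 (2 * Real.pi))).toReal + (μn (Set.Icc 0 (2 * Real.pi))).toReal ≤ m / 2 ∧
    ∀ z ∈ unitDisk, p z =
      (∫ t in Set.Icc 0 (2 * Real.pi), pmKernel z t ∂μp) -
      (∫ t in Set.Icc 0 (2 * Real.pi), pmKernel z t ∂μn)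

/-- `p ∈ P_m(β)` iff `p = β + (1 - β) q` on the unit disk for some `q ∈ P_m`. -/
def MemPmBeta (m β : ℝ) (p : ℂ → ℂ) : Prop :=
  ∃ q : ℂ → ℂ, MemPm m q ∧ ∀ z ∈ unitDisk, p z = (β : ℂ) + (1 - (β : ℂ)) * q z

/-- `f` and `g` form a bi-univalent pair: `f` is analytic and injective on the unit disk with
`f 0 = 0`, `f' 0 = 1`, and `g` is the univalent analytic continuation of `f⁻¹` to the unit
disk: `g` is analytic and injective on the unit disk, `g 0 = 0`, and `f (g w) = w` for
`|w| < 1/4`. -/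
def BiUnivalentPair (f g : ℂ → ℂ) : Prop :=
  AnalyticOnNhd ℂ f unitDisk ∧ f 0 = 0 ∧ deriv f 0 = 1 ∧ Set.InjOn f unitDisk ∧
  AnalyticOnNhd ℂ g unitDisk ∧ Set.InjOn g unitDisk ∧ g 0 = 0 ∧
  ∀ w : ℂ, ‖w‖ < 1 / 4 → f (g w) = w

/-- MacLaurin coefficients of `(f ∗ k)(z)/z`: the constant term is `1` and the coefficient of
`z^n` for `n ≥ 1` is `a_{n+1} k_{n+1}`. -/
def brCoeff (f k : ℂ → ℂ) (n : ℕ) : ℂ := if n = 0 then 1 else mc f (n + 1) * mc k (n + 1)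

/-- The function `Φ(z) = 1 + ∑_{n≥2} a_n k_n z^{n-1}`, i.e. `(f ∗ k)(z)/z`. -/
def brFun (f k : ℂ → ℂ) (z : ℂ) : ℂ := ∑' n : ℕ, brCoeff f k n * z ^ n

/-- `f ∈ BR^k(m; β)`: `f` is bi-univalent with inverse `g`, and the series
`Φ(z) = 1 + ∑_{n≥2} a_n k_n z^{n-1}` and `Ψ(w) = 1 + ∑_{n≥2} b_n k_n w^{n-1}` converge on
the unit disk and define functions of class `P_m(β)`. -/
def MemBR (m β : ℝ) (k f g : ℂ → ℂ) : Prop :=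
  BiUnivalentPair f g ∧
  (∀ z ∈ unitDisk, Summable fun n : ℕ => brCoeff f k n * z ^ n) ∧
  (∀ w ∈ unitDisk, Summable fun n : ℕ => brCoeff g k n * w ^ n) ∧
  MemPmBeta m β (brFun f k) ∧ MemPmBeta m β (brFun g k)

/-!
Write `Φ = β + (1 - β) q` with `q ∈ P_m`. Under the integral, the kernel expands as
`(1 - z e^{it}) / (1 + z e^{it}) = 1 + 2 ∑_{n ≥ 1} (-e^{it})ⁿ zⁿ`, so the Taylor coefficients of `q`
are integrals of functions of modulus `2` against `μ` and are bounded by `2‖μ‖ ≤ m`. By uniqueness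
of power series coefficients the coefficient `a₃ k₃` of `Φ` equals `(1 - β)` times that of `q`.
-/

lemma hasFPowerSeriesOnBall_ofScalars_of_hasSum {c : ℕ → ℂ} {f : ℂ → ℂ}
    (hf : ∀ z ∈ unitDisk, HasSum (fun n ↦ c n * z ^ n) (f z)) :
    HasFPowerSeriesOnBall f (.ofScalars ℂ c) 0 1 := by
  refine ⟨le_of_forall_lt_imp_le_of_dense fun r hr ↦ ?_, one_pos, fun {y} hy ↦ ?_⟩
  · lift r to NNReal using hr.ne_top
    apply FormalMultilinearSeries.le_radius_of_summable
    have hr' : (r : ℂ) ∈ unitDisk := by simpa [unitDisk] using hr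
    simpa [FormalMultilinearSeries.ofScalars_norm] using (hf _ hr').summable.norm
  · rw [← ENNReal.coe_one, Metric.eball_coe, NNReal.coe_one] at hy
    simpa [FormalMultilinearSeries.ofScalars_apply_eq, mul_comm] using hf y hy

lemma coeff_eq_of_hasSum {c d : ℕ → ℂ} {f : ℂ → ℂ}
    (hc : ∀ z ∈ unitDisk, HasSum (fun n ↦ c n * z ^ n) (f z))
    (hd : ∀ z ∈ unitDisk, HasSum (fun n ↦ d n * z ^ n) (f z)) : c = d :=
  FormalMultilinearSeries.ofScalars_series_injective ℂ ℂ <|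
    (hasFPowerSeriesOnBall_ofScalars_of_hasSum hc).hasFPowerSeriesAt.eq_formalMultilinearSeries
      (hasFPowerSeriesOnBall_ofScalars_of_hasSum hd).hasFPowerSeriesAt

/-- `pmKernel z t = 2 / (1 + z e^{it}) - 1`, expanded as a geometric series in `z`. -/
def pmKernelCoeff (t : ℝ) (n : ℕ) : ℂ := if n = 0 then 1 else 2 * (-exp (t * I)) ^ n

lemma norm_pmKernelCoeff_le (t : ℝ) (n : ℕ) : ‖pmKernelCoeff t n‖ ≤ 2 := by
  unfold pmKernelCoeff
  split_ifs <;> simp [norm_exp_ofReal_mul_I]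

lemma continuous_pmKernelCoeff (n : ℕ) : Continuous fun t ↦ pmKernelCoeff t n := by
  unfold pmKernelCoeff
  split_ifs <;> fun_prop

lemma hasSum_pmKernel (t : ℝ) {z : ℂ} (hz : ‖z‖ < 1) :
    HasSum (fun n ↦ pmKernelCoeff t n * z ^ n) (pmKernel z t) := by
  set w := z * exp (t * I)
  have hw : ‖-w‖ < 1 := by simpa [w, norm_exp_ofReal_mul_I] using hz
  have hw1 : 1 + w ≠ 0 := fun h ↦ by simp [show w = -1 by linear_combination h] at hw
  have hcoeff : (fun n ↦ pmKernelCoeff t n * z ^ n) =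
      fun n ↦ 2 * (-w) ^ n - if n = 0 then 1 else 0 := by
    ext n
    rcases eq_or_ne n 0 with rfl | hn
    · norm_num [pmKernelCoeff]
    · simp only [pmKernelCoeff, if_neg hn, sub_zero, w]
      ring
  have hkernel : pmKernel z t = 2 * (1 - -w)⁻¹ - 1 := by
    change (1 - w) / (1 + w) = _
    rw [sub_neg_eq_add]
    field_simp
    ring
  rw [hcoeff, hkernel]
  exact ((hasSum_geometric_of_norm_lt_one hw).mul_left 2).sub (hasSum_ite_eq 0 1)

lemma hasSum_integral_pmKernel (ν : Measure ℝ) [IsFiniteMeasure ν] {z : ℂ} (hz : ‖z‖ < 1) :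
    HasSum (fun n ↦ (∫ t, pmKernelCoeff t n ∂ν) * z ^ n) (∫ t, pmKernel z t ∂ν) := by
  have hbound (n : ℕ) (t : ℝ) : ‖pmKernelCoeff t n * z ^ n‖ ≤ 2 * ‖z‖ ^ n := by
    rw [norm_mul, norm_pow]
    gcongr
    exact norm_pmKernelCoeff_le t n
  have hint (n : ℕ) : Integrable (fun t ↦ pmKernelCoeff t n * z ^ n) ν :=
    .of_bound ((continuous_pmKernelCoeff n).mul continuous_const).aestronglyMeasurable _
      (.of_forall (hbound n))
  have hsum : Summable fun n ↦ ∫ t, ‖pmKernelCoeff t n * z ^ n‖ ∂ν := by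
    refine .of_norm_bounded
      (((summable_geometric_of_lt_one (norm_nonneg z) hz).mul_left 2).mul_right (ν.real univ))
      fun n ↦ norm_integral_le_of_norm_le_const (.of_forall fun t ↦ ?_)
    simpa using hbound n t
  simpa only [integral_mul_const, fun t ↦ (hasSum_pmKernel t hz).tsum_eq] using
    hasSum_integral_of_summable_integral_norm hint hsum

theorem MemPm.exists_hasSum_norm_coeff_le {m : ℝ} {q : ℂ → ℂ} (hq : MemPm m q) :
    ∃ d : ℕ → ℂ, (∀ n, ‖d n‖ ≤ m) ∧ ∀ z ∈ unitDisk, HasSum (fun n ↦ d n * z ^ n) (q z) := by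
  obtain ⟨-, -, μp, μn, _, _, -, hvar, hrep⟩ := hq
  set s := Icc (0 : ℝ) (2 * Real.pi)
  refine ⟨fun n ↦ (∫ t in s, pmKernelCoeff t n ∂μp) - ∫ t in s, pmKernelCoeff t n ∂μn,
    fun n ↦ ?_, fun z hz ↦ ?_⟩
  · have hbound (μ : Measure ℝ) [IsFiniteMeasure μ] :
        ‖∫ t in s, pmKernelCoeff t n ∂μ‖ ≤ 2 * (μ s).toReal :=
      norm_setIntegral_le_of_norm_le_const (measure_lt_top μ s)
        fun t _ ↦ norm_pmKernelCoeff_le t n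
    calc _ ≤ 2 * (μp s).toReal + 2 * (μn s).toReal :=
          (norm_sub_le _ _).trans (add_le_add (hbound μp) (hbound μn))
      _ ≤ m := by linarith
  · have hz' : ‖z‖ < 1 := by simpa [unitDisk] using hz
    rw [hrep z hz]
    simpa only [sub_mul] using (hasSum_integral_pmKernel (μp.restrict s) hz').sub
      (hasSum_integral_pmKernel (μn.restrict s) hz')

theorem MemPmBeta.norm_coeff_le {m β : ℝ} {p : ℂ → ℂ} {c : ℕ → ℂ} (hp : MemPmBeta m β p)
    (hβ : β ≤ 1) (hc : ∀ z ∈ unitDisk, HasSum (fun n ↦ c n * z ^ n) (p z)) {n : ℕ} (hn : n ≠ 0) :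
    ‖c n‖ ≤ m * (1 - β) := by
  obtain ⟨q, hq, hpq⟩ := hp
  obtain ⟨d, hd, hqd⟩ := hq.exists_hasSum_norm_coeff_le
  have hpd (z : ℂ) (hz : z ∈ unitDisk) : HasSum
      (fun n ↦ ((if n = 0 then (β : ℂ) else 0) + (1 - β) * d n) * z ^ n) (p z) := by
    have hconst : HasSum (fun n ↦ (if n = 0 then (β : ℂ) else 0) * z ^ n) β := by
      convert hasSum_ite_eq 0 (β : ℂ) using 2 with n
      split_ifs <;> simp_all
    rw [hpq z hz]
    simpa only [add_mul, mul_assoc] using hconst.add ((hqd z hz).mul_left (1 - (β : ℂ)))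
  have hcn : c n = (1 - β) * d n := by simp [coeff_eq_of_hasSum hc hpd, hn]
  have hnorm : ‖(1 : ℂ) - β‖ = 1 - β := by
    rw [← ofReal_one, ← ofReal_sub, norm_real, Real.norm_of_nonneg (sub_nonneg.mpr hβ)]
  rw [hcn, norm_mul, hnorm, mul_comm m]
  exact mul_le_mul_of_nonneg_left (hd n) (sub_nonneg.mpr hβ)

theorem BR_a3_bound_general (m β : ℝ) (hβ1 : β < 1) (k f g : ℂ → ℂ) (hk3 : mc k 3 ≠ 0)
    (hf : MemBR m β k f g) :
    ‖mc f 3‖ ≤ m * (1 - β) / ‖mc k 3‖ := by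
  obtain ⟨-, hsum, -, hΦ, -⟩ := hf
  have hcoeff : ‖mc f 3 * mc k 3‖ ≤ m * (1 - β) :=
    hΦ.norm_coeff_le hβ1.le (fun z hz ↦ (hsum z hz).hasSum) two_ne_zero
  rwa [le_div_iff₀ (norm_pos_iff.mpr hk3), ← norm_mul]

/-- Theorem 2.1, bound for `|a₃|`. -/
theorem BR_a3_bound (m β : ℝ) (hm : 2 ≤ m) (hβ0 : 0 ≤ β) (hβ1 : β < 1)
    (k kinv f g : ℂ → ℂ) (hk : BiUnivalentPair k kinv)
    (hk2 : mc k 2 ≠ 0) (hk3 : mc k 3 ≠ 0)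
    (hf : MemBR m β k f g) :
    ‖mc f 3‖ ≤ m * (1 - β) / ‖mc k 3‖ :=
  BR_a3_bound_general m β hβ1 k f g hk3 hf
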